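/- For a positive even integer ℓ divisible by 6 and W = shuffle_◇(X,Y) with X, Y equal-length strings over disjoint alphabets avoiding ◇: the length-ℓ factor of W centred at position r is an Abelian square if and only if the length-ℓ/3 factors of X centred at ⌊(r+2)/3⌋, and of Y centred at ⌊r/3⌋, are both Abelian squares. -/
import Mathlib


/-- A string is an Abelian square. -/
def IsAbSquare {α : Type*} (W : List α) : Prop :=
  ∃ U V : List α, W = U ++ V ∧ U.length = V.length ∧ U.Perm V

/-- shuffle_◇(X,Y) = X[1]◇Y[1]X[2]◇Y[2]⋯ for equal-length X, Y. -/
def shuffle {α : Type*} (d : α) (X Y : List α) : List α :=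
  (List.zipWith (fun a b => [a, d, b]) X Y).flatten

lemma shuffle_cons {α : Type*} (d x y : α) (X Y : List α) :
    shuffle d (x::X) (y::Y) = x :: d :: y :: shuffle d X Y := by
  simp [shuffle]

lemma shuffle_length {α : Type*} (d : α) : ∀ (X Y : List α), X.length = Y.length →
    (shuffle d X Y).length = 3 * X.length := by
  intro X
  induction X with
  | nil => intro Y h; simp [shuffle]
  | cons x X ih =>
    intro Y h
    cases Y with
    | nil => simp at h
    | cons y Y =>
      rw [shuffle_cons]
      simp only [List.length_cons]
      rw [ih Y (by simpa using h)]
      ring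

lemma seg {α : Type*} (d : α) : ∀ (X Y : List α), X.length = Y.length →
    ∀ s k, s + k ≤ 3 * X.length →
    ((((shuffle d X Y).drop s).take k : List α) : Multiset α) =
      (((X.drop ((s+2)/3)).take ((s+k+2)/3 - (s+2)/3) : List α) : Multiset α)
      + (((Y.drop (s/3)).take ((s+k)/3 - s/3) : List α) : Multiset α)
      + Multiset.replicate ((s+k+1)/3 - (s+1)/3) d := by
  intro X
  induction X with
  | nil =>
    intro Y h s k hk
    simp only [List.length_nil] at h hk
    have hs : s = 0 := by omega
    have hk0 : k = 0 := by omega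
    subst hs hk0
    simp [shuffle]
  | cons x X ih =>
    intro Y h s k hk
    cases Y with
    | nil => simp at h
    | cons y Y =>
      have h' : X.length = Y.length := by simpa using h
      simp only [List.length_cons] at hk
      rw [shuffle_cons]
      rcases lt_or_ge s 3 with hs | hs
      · interval_cases s
        · -- s = 0
          rcases lt_or_ge k 3 with hk3 | hk3
          · interval_cases k <;> simp <;> rfl
          · obtain ⟨k', rfl⟩ : ∃ k', k = k' + 3 := ⟨k-3, by omega⟩
            have e1 : (0+(k'+3)+2)/3 - (0+2)/3 = ((0+k'+2)/3 - (0+2)/3) + 1 := by omega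
            have e2 : (0+(k'+3))/3 - 0/3 = ((0+k')/3 - 0/3) + 1 := by omega
            have e3 : (0+(k'+3)+1)/3 - (0+1)/3 = ((0+k'+1)/3 - (0+1)/3) + 1 := by omega
            rw [e1, e2, e3]
            have ih' := ih Y h' 0 k' (by omega)
            simp only [List.drop_zero, Nat.zero_add, Nat.zero_div, Nat.sub_zero,
              List.take_succ_cons, Multiset.replicate_succ,
              show (2:ℕ)/3 = 0 from rfl, show (1:ℕ)/3 = 0 from rfl] at ih' ⊢
            simp only [← Multiset.cons_coe, ih', ← Multiset.singleton_add]
            abel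
        · -- s = 1
          rcases lt_or_ge k 2 with hk3 | hk3
          · interval_cases k <;> simp <;> rfl
          · obtain ⟨k', rfl⟩ : ∃ k', k = k' + 2 := ⟨k-2, by omega⟩
            have e1 : (1+(k'+2)+2)/3 - (1+2)/3 = (0+k'+2)/3 - (0+2)/3 := by omega
            have e2 : (1+(k'+2))/3 - 1/3 = ((0+k')/3 - 0/3) + 1 := by omega
            have e3 : (1+(k'+2)+1)/3 - (1+1)/3 = ((0+k'+1)/3 - (0+1)/3) + 1 := by omega
            have e4 : (1+2)/3 = 1 := by norm_num
            rw [e1, e2, e3, e4]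
            have ih' := ih Y h' 0 k' (by omega)
            simp only [List.drop_zero, Nat.zero_add, Nat.zero_div, Nat.sub_zero,
              List.take_succ_cons, List.drop_succ_cons, List.drop_one,
              Multiset.replicate_succ,
              show (2:ℕ)/3 = 0 from rfl, show (1:ℕ)/3 = 0 from rfl] at ih' ⊢
            simp only [← Multiset.cons_coe, ih', ← Multiset.singleton_add]
            abel
        · -- s = 2
          rcases lt_or_ge k 1 with hk3 | hk3
          · interval_cases k ; simp
          · obtain ⟨k', rfl⟩ : ∃ k', k = k' + 1 := ⟨k-1, by omega⟩
            have e1 : (2+(k'+1)+2)/3 - (2+2)/3 = (0+k'+2)/3 - (0+2)/3 := by omega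
            have e2 : (2+(k'+1))/3 - 2/3 = ((0+k')/3 - 0/3) + 1 := by omega
            have e3 : (2+(k'+1)+1)/3 - (2+1)/3 = (0+k'+1)/3 - (0+1)/3 := by omega
            have e4 : (2+2)/3 = 1 := by norm_num
            have e5 : (2+1)/3 = 1 := by norm_num
            rw [e1, e2, e3, e4]
            have ih' := ih Y h' 0 k' (by omega)
            simp only [List.drop_zero, Nat.zero_add, Nat.zero_div, Nat.sub_zero,
              List.take_succ_cons, List.drop_succ_cons, List.drop_one,
              Multiset.replicate_succ,
              show (2:ℕ)/3 = 0 from rfl, show (1:ℕ)/3 = 0 from rfl] at ih' ⊢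
            simp only [← Multiset.cons_coe, ih', ← Multiset.singleton_add]
            abel
      · obtain ⟨s', rfl⟩ : ∃ s', s = s' + 3 := ⟨s-3, by omega⟩
        have e1 : (s'+3+2)/3 = (s'+2)/3 + 1 := by omega
        have e2 : (s'+3)/3 = s'/3 + 1 := by omega
        have e4 : (s'+3+k+2)/3 - (s'+3+2)/3 = (s'+k+2)/3 - (s'+2)/3 := by omega
        have e5 : (s'+3+k)/3 - (s'+3)/3 = (s'+k)/3 - s'/3 := by omega
        have e6 : (s'+3+k+1)/3 - (s'+3+1)/3 = (s'+k+1)/3 - (s'+1)/3 := by omega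
        rw [e4, e5, e6, e1, e2]
        simp only [List.drop_succ_cons]
        exact ih Y h' s' k (by omega)

lemma absquare_append_iff {α : Type*} {A B : List α} (h : A.length = B.length) :
    IsAbSquare (A ++ B) ↔ A.Perm B := by
  constructor
  · rintro ⟨U, V, hUV, hlen, hperm⟩
    have hl : U.length = A.length := by
      have := congrArg List.length hUV
      simp at this; omega
    obtain ⟨rfl, rfl⟩ := List.append_inj hUV.symm hl
    exact hperm
  · intro hp
    exact ⟨A, B, rfl, h, hp⟩

lemma disj_add_iff {α : Type*} [DecidableEq α] {u v u' v' : Multiset α}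
    (h : ∀ a, (a ∈ u ∨ a ∈ u') → (a ∉ v ∧ a ∉ v')) :
    u + v = u' + v' ↔ u = u' ∧ v = v' := by
  constructor
  · intro he
    have hc : ∀ a, u.count a + v.count a = u'.count a + v'.count a := by
      intro a
      have := congrArg (Multiset.count a) he
      simpa [Multiset.count_add] using this
    constructor <;> ext a
    · by_cases ha : a ∈ u ∨ a ∈ u'
      · have := h a ha
        have h1 : v.count a = 0 := Multiset.count_eq_zero_of_notMem this.1
        have h2 : v'.count a = 0 := Multiset.count_eq_zero_of_notMem this.2
        have := hc a; omega
      · push_neg at ha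
        rw [Multiset.count_eq_zero_of_notMem ha.1,
            Multiset.count_eq_zero_of_notMem ha.2]
    · by_cases ha : a ∈ u ∨ a ∈ u'
      · have h1 : u.count a = u'.count a := by
          have := h a ha
          have h1 : v.count a = 0 := Multiset.count_eq_zero_of_notMem this.1
          have h2 : v'.count a = 0 := Multiset.count_eq_zero_of_notMem this.2
          have := hc a; omega
        have := hc a; omega
      · push_neg at ha
        have h1 : u.count a = 0 := Multiset.count_eq_zero_of_notMem ha.1
        have h2 : u'.count a = 0 := Multiset.count_eq_zero_of_notMem ha.2
        have := hc a; omega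
  · rintro ⟨rfl, rfl⟩; rfl

/-- For ℓ > 0 divisible by 6 and W = shuffle_◇(X,Y) with X, Y equal-length strings
over disjoint alphabets avoiding ◇: the length-ℓ factor of W centred at position r
is an Abelian square iff the length-ℓ/3 factor of X centred at ⌊(r+2)/3⌋ and the
length-ℓ/3 factor of Y centred at ⌊r/3⌋ are both Abelian squares. -/
theorem shuffle_absquare_iff {α : Type*} [DecidableEq α] (d : α) (X Y : List α)
    (ℓ r : ℕ) (hlen : X.length = Y.length)
    (hdisj : ∀ a ∈ X, ∀ b ∈ Y, a ≠ b) (hdX : d ∉ X) (hdY : d ∉ Y)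
    (h6 : 6 ∣ ℓ) (hpos : 0 < ℓ)
    (h1 : ℓ / 2 ≤ r) (h2 : r + ℓ / 2 ≤ (shuffle d X Y).length) :
    IsAbSquare (((shuffle d X Y).drop (r - ℓ / 2)).take ℓ) ↔
      (IsAbSquare ((X.drop ((r + 2) / 3 - ℓ / 6)).take (ℓ / 3)) ∧
        IsAbSquare ((Y.drop (r / 3 - ℓ / 6)).take (ℓ / 3))) := by
  obtain ⟨m, rfl⟩ := h6
  have hW : (shuffle d X Y).length = 3 * X.length := shuffle_length d X Y hlen
  rw [hW] at h2
  rw [show 6*m/2 = 3*m from by omega] at h1 ⊢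
  rw [show 6*m/6 = m from by omega, show 6*m/3 = 2*m from by omega]
  have h1' : 3*m ≤ r := h1
  have hm : 1 ≤ m := by omega
  have h2' : r + 3*m ≤ 3 * X.length := by omega
  have hlY : r + 3*m ≤ 3*Y.length := by omega
  -- abbreviations
  set s := r - 3*m with hs
  set px := (r+2)/3 - m with hpx
  set py := r/3 - m with hpy
  set W := shuffle d X Y with hWdef
  -- split LHS window
  have hsplitW : (W.drop s).take (6*m)
      = (W.drop s).take (3*m) ++ (W.drop (s+3*m)).take (3*m) := by
    rw [show 6*m = 3*m+3*m from by ring, List.take_add, List.drop_drop]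
  have hlenA : ((W.drop s).take (3*m)).length = 3*m := by
    simp [List.length_take, List.length_drop, hW]; omega
  have hlenB : ((W.drop (s+3*m)).take (3*m)).length = 3*m := by
    simp [List.length_take, List.length_drop, hW]; omega
  have segA := seg d X Y hlen s (3*m) (by omega)
  have segB := seg d X Y hlen (s+3*m) (3*m) (by omega)
  rw [show (s+3*m+2)/3 - (s+2)/3 = m from by omega,
    show (s+3*m)/3 - s/3 = m from by omega,
    show (s+3*m+1)/3 - (s+1)/3 = m from by omega,
    show (s+2)/3 = px from by omega, show s/3 = py from by omega] at segA
  rw [show (s+3*m+3*m+2)/3 - (s+3*m+2)/3 = m from by omega,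
    show (s+3*m+3*m)/3 - (s+3*m)/3 = m from by omega,
    show (s+3*m+3*m+1)/3 - (s+3*m+1)/3 = m from by omega,
    show (s+3*m+2)/3 = px+m from by omega,
    show (s+3*m)/3 = py+m from by omega] at segB
  -- split RHS windows
  have hsplitX : (X.drop px).take (2*m)
      = (X.drop px).take m ++ (X.drop (px+m)).take m := by
    rw [show 2*m = m+m from by ring, List.take_add, List.drop_drop]
  have hsplitY : (Y.drop py).take (2*m)
      = (Y.drop py).take m ++ (Y.drop (py+m)).take m := by
    rw [show 2*m = m+m from by ring, List.take_add, List.drop_drop]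
  have hlX : ((X.drop px).take m).length = m := by
    simp [List.length_take, List.length_drop]; omega
  have hlX' : ((X.drop (px+m)).take m).length = m := by
    simp [List.length_take, List.length_drop]; omega
  have hlY1 : ((Y.drop py).take m).length = m := by
    simp [List.length_take, List.length_drop]; omega
  have hlY2 : ((Y.drop (py+m)).take m).length = m := by
    simp [List.length_take, List.length_drop]; omega
  rw [hsplitW, hsplitX, hsplitY,
    absquare_append_iff (by omega), absquare_append_iff (by omega),
    absquare_append_iff (by omega),
    ← Multiset.coe_eq_coe, ← Multiset.coe_eq_coe, ← Multiset.coe_eq_coe,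
    segA, segB, add_left_inj]
  apply disj_add_iff
  intro a ha
  have haX : a ∈ X := by
    rcases ha with ha | ha <;>
      exact (List.drop_sublist _ _).subset ((List.take_sublist _ _).subset (by simpa using ha))
  constructor <;> intro hb <;>
    exact hdisj a haX a
      ((List.drop_sublist _ _).subset ((List.take_sublist _ _).subset (by simpa using hb))) rfl
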